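/- arXiv:1912.08419 — 3 statements merged into one kernel-verified Lean document; each statement's English description precedes it below -/
import Mathlib

section
/- The chain recurrent set CR(f) of a continuous endomorphism f of a compact abelian topological group G is a subgroup of G. -/
/-!
Since `f` is a homomorphism and `G` is abelian, the pointwise product of an `E`-chain and an
`F`-chain of the same length is an `E * F`-chain, and the pointwise inverse of an `E⁻¹`-chain is
an `E`-chain. Closed chains can be repeated, so two of them can be brought to a common length.
-/

open Pointwise

/-- `EChainFrom f E x y` : there is an `E`-chain of length `n ≥ 1` from `x` to `y`. -/
def EChainFrom {G : Type*} [Group G] (f : G → G) (E : Set G) (x y : G) : Prop :=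
  ∃ n : ℕ, 1 ≤ n ∧ ∃ c : ℕ → G, c 0 = x ∧ c n = y ∧
    ∀ i < n, f (c i) * (c (i + 1))⁻¹ ∈ E

/-- `x ⇝ y` : for every neighborhood `E` of the identity there is an `E`-chain
from `x` to `y`. -/
def ChainTo {G : Type*} [Group G] [TopologicalSpace G] (f : G → G) (x y : G) : Prop :=
  ∀ E ∈ nhds (1 : G), EChainFrom f E x y

/-- The chain recurrent set of `f`. -/
def chainRecurrentSet {G : Type*} [Group G] [TopologicalSpace G] (f : G → G) : Set G :=
  {x : G | ChainTo f x x}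

def EChainOfLength {G : Type*} [Group G] (f : G → G) (E : Set G) (n : ℕ) (x y : G) : Prop :=
  ∃ c : ℕ → G, c 0 = x ∧ c n = y ∧ ∀ i < n, f (c i) * (c (i + 1))⁻¹ ∈ E

theorem eChainFrom_iff {G : Type*} [Group G] {f : G → G} {E : Set G} {x y : G} :
    EChainFrom f E x y ↔ ∃ n, 1 ≤ n ∧ EChainOfLength f E n x y :=
  Iff.rfl

namespace EChainOfLength

section Group

variable {G : Type*} [Group G] {f : G → G} {E F : Set G} {m n : ℕ} {x y z : G}

theorem zero (f : G → G) (E : Set G) (x : G) : EChainOfLength f E 0 x x :=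
  ⟨fun _ => x, rfl, rfl, fun _ hi => absurd hi (Nat.not_lt_zero _)⟩

theorem mono (h : EChainOfLength f E n x y) (hEF : E ⊆ F) : EChainOfLength f F n x y :=
  let ⟨c, hc0, hcn, hc⟩ := h
  ⟨c, hc0, hcn, fun i hi => hEF (hc i hi)⟩

theorem append (h₁ : EChainOfLength f E m x y) (h₂ : EChainOfLength f E n y z) :
    EChainOfLength f E (m + n) x z := by
  obtain ⟨c, hc0, hcm, hc⟩ := h₁
  obtain ⟨d, hd0, hdn, hd⟩ := h₂
  set e : ℕ → G := fun i => if i ≤ m then c i else d (i - m)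
  have he_of_le : ∀ i, m ≤ i → e i = d (i - m) := by
    intro i hmi
    rcases hmi.eq_or_lt with rfl | hmi
    · simp [e, hcm, hd0]
    · simp [e, Nat.not_le_of_lt hmi]
  refine ⟨e, by simp [e, hc0], by simp [he_of_le, hdn], fun i hi => ?_⟩
  rcases lt_or_ge i m with him | hmi
  · simpa [e, him.le, Nat.succ_le_of_lt him] using hc i him
  · rw [he_of_le i hmi, he_of_le (i + 1) (by omega), Nat.sub_add_comm hmi]
    exact hd (i - m) (by omega)

theorem loop_mul (h : EChainOfLength f E n x x) (k : ℕ) : EChainOfLength f E (n * k) x x := by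
  induction k with
  | zero => exact zero f E x
  | succ k ih => exact ih.append h

end Group

section CommGroup

variable {G : Type*} [CommGroup G] {f : G →* G} {E F : Set G} {n : ℕ} {x x' y y' : G}

theorem mul (h : EChainOfLength f E n x y) (h' : EChainOfLength f F n x' y') :
    EChainOfLength f (E * F) n (x * x') (y * y') := by
  obtain ⟨c, hc0, hcn, hc⟩ := h
  obtain ⟨d, hd0, hdn, hd⟩ := h'
  refine ⟨c * d, by simp [hc0, hd0], by simp [hcn, hdn], fun i hi => ?_⟩
  have hsplit : f ((c * d) i) * ((c * d) (i + 1))⁻¹ =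
      f (c i) * (c (i + 1))⁻¹ * (f (d i) * (d (i + 1))⁻¹) := by
    simp only [Pi.mul_apply, map_mul, mul_inv, mul_mul_mul_comm]
  exact hsplit ▸ Set.mul_mem_mul (hc i hi) (hd i hi)

theorem inv (h : EChainOfLength f E⁻¹ n x y) : EChainOfLength f E n x⁻¹ y⁻¹ := by
  obtain ⟨c, hc0, hcn, hc⟩ := h
  refine ⟨c⁻¹, by simp [hc0], by simp [hcn], fun i hi => ?_⟩
  simpa [map_inv, mul_comm] using hc i hi

end CommGroup

end EChainOfLength

section chainRecurrentSet

variable {G : Type*}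

theorem mem_chainRecurrentSet_of_isFixedPt [Group G] [TopologicalSpace G] {f : G → G} {x : G}
    (hx : Function.IsFixedPt f x) : x ∈ chainRecurrentSet f := fun E hE =>
  ⟨1, le_rfl, fun _ => x, rfl, rfl, fun _ _ => by simpa [hx.eq] using mem_of_mem_nhds hE⟩

variable [CommGroup G] [TopologicalSpace G] {f : G →* G} {x y : G}

theorem mul_mem_chainRecurrentSet [ContinuousMul G] (hx : x ∈ chainRecurrentSet f)
    (hy : y ∈ chainRecurrentSet f) : x * y ∈ chainRecurrentSet f := by
  intro E hE
  obtain ⟨V, hV, hVE⟩ := exists_nhds_one_split hE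
  obtain ⟨n, hn, hcx⟩ := eChainFrom_iff.mp (hx V hV)
  obtain ⟨m, hm, hcy⟩ := eChainFrom_iff.mp (hy V hV)
  have hcy' : EChainOfLength f V (n * m) y y := mul_comm m n ▸ hcy.loop_mul n
  exact eChainFrom_iff.mpr
    ⟨n * m, Nat.mul_pos hn hm, ((hcx.loop_mul m).mul hcy').mono (Set.mul_subset_iff.mpr hVE)⟩

theorem inv_mem_chainRecurrentSet [IsTopologicalGroup G] (hx : x ∈ chainRecurrentSet f) :
    x⁻¹ ∈ chainRecurrentSet f := fun E hE =>
  let ⟨n, hn, hc⟩ := eChainFrom_iff.mp (hx E⁻¹ (inv_mem_nhds_one G hE))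
  ⟨n, hn, hc.inv⟩

end chainRecurrentSet

theorem chainRecurrentSet_is_subgroup_general {G : Type*} [CommGroup G] [TopologicalSpace G]
    [IsTopologicalGroup G] (f : G →* G) :
    ∃ H : Subgroup G, (H : Set G) = chainRecurrentSet ⇑f :=
  ⟨{ carrier := chainRecurrentSet f
     one_mem' := mem_chainRecurrentSet_of_isFixedPt (map_one f)
     mul_mem' := mul_mem_chainRecurrentSet
     inv_mem' := inv_mem_chainRecurrentSet }, rfl⟩

/-- The chain recurrent set of a continuous endomorphism of a compact abelian
topological group is a subgroup. -/
theorem chainRecurrentSet_is_subgroup {G : Type*} [CommGroup G] [TopologicalSpace G]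
    [IsTopologicalGroup G] [CompactSpace G] (f : G →* G) (hf : Continuous f) :
    ∃ H : Subgroup G, (H : Set G) = chainRecurrentSet ⇑f :=
  chainRecurrentSet_is_subgroup_general f
end

section
/- Let f be a continuous endomorphism of a compact abelian topological group G with the shadowing property, and let H be an f-invariant subgroup of G. Then for every neighborhood E of the identity there exists a neighborhood D of the identity such that every sequence (y_n) with f(y_n)·y_{n+1}⁻¹ ∈ D·H for all n admits a point y ∈ G with f^n(y)·y_n⁻¹ ∈ E·H for all n. -/
/-!
Write each error of the `D·H`-pseudo-orbit as `f (y k) * (y (k + 1))⁻¹ = d k * h k` with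
`d k ∈ D`, `h k ∈ H`, and run `f` from `y 0`, multiplying by `(d k)⁻¹` at step `k`. The result
is a genuine `D`-pseudo-orbit `x`, and since `G` is abelian and `f H ⊆ H`, the quotients
`x k * (y k)⁻¹` stay in `H`. A point shadowing `x` within `E` then shadows `y` within `E·H`.
-/

open Pointwise

/-- `f` has the shadowing property: for every neighborhood `E` of the identity there is a
neighborhood `D` of the identity such that every `D`-pseudo-orbit is `E`-shadowed. -/
def HasShadowingProperty {G : Type*} [Group G] [TopologicalSpace G] (f : G → G) : Prop :=
  ∀ E ∈ nhds (1 : G), ∃ D ∈ nhds (1 : G),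
    ∀ x : ℕ → G, (∀ k : ℕ, f (x k) * (x (k + 1))⁻¹ ∈ D) →
      ∃ y : G, ∀ k : ℕ, f^[k] y * (x k)⁻¹ ∈ E

section CorrectedOrbit

variable {G : Type*} [Group G]

def correctedOrbit (f : G →* G) (x₀ : G) (d : ℕ → G) : ℕ → G
  | 0 => x₀
  | k + 1 => (d k)⁻¹ * f (correctedOrbit f x₀ d k)

theorem correctedOrbit_mul_inv_succ (f : G →* G) (x₀ : G) (d : ℕ → G) (k : ℕ) :
    f (correctedOrbit f x₀ d k) * (correctedOrbit f x₀ d (k + 1))⁻¹ = d k := by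
  simp [correctedOrbit]

end CorrectedOrbit

section CommGroup

variable {G : Type*} [CommGroup G] {f : G →* G} {H : Subgroup G}

theorem correctedOrbit_mul_inv_mem (hinv : ∀ x ∈ H, f x ∈ H) {y d : ℕ → G}
    (hy : ∀ k, (d k)⁻¹ * (f (y k) * (y (k + 1))⁻¹) ∈ H) (k : ℕ) :
    correctedOrbit f (y 0) d k * (y k)⁻¹ ∈ H := by
  induction k with
  | zero => simp [correctedOrbit]
  | succ k ih =>
    have hstep : correctedOrbit f (y 0) d (k + 1) * (y (k + 1))⁻¹ =
        f (correctedOrbit f (y 0) d k * (y k)⁻¹) * ((d k)⁻¹ * (f (y k) * (y (k + 1))⁻¹)) := by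
      simp only [correctedOrbit, map_mul, map_inv]
      rw [mul_comm (d k)⁻¹, mul_left_comm (d k)⁻¹]
      group
    rw [hstep]
    exact H.mul_mem (hinv _ ih) (hy k)

theorem exists_pseudoOrbit_of_mem_mul_subgroup (hinv : ∀ x ∈ H, f x ∈ H) {D : Set G} {y : ℕ → G}
    (hy : ∀ k, f (y k) * (y (k + 1))⁻¹ ∈ D * (H : Set G)) :
    ∃ x : ℕ → G, (∀ k, f (x k) * (x (k + 1))⁻¹ ∈ D) ∧ ∀ k, x k * (y k)⁻¹ ∈ H := by
  choose d hd h hh hdh using fun k => Set.mem_mul.mp (hy k)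
  refine ⟨correctedOrbit f (y 0) d, fun k => ?_, correctedOrbit_mul_inv_mem hinv fun k => ?_⟩
  · rw [correctedOrbit_mul_inv_succ]
    exact hd k
  · rw [← hdh k, inv_mul_cancel_left]
    exact hh k

end CommGroup

theorem shadowing_mod_subgroup_general {G : Type*} [CommGroup G] [TopologicalSpace G]
    (f : G →* G)
    (hsh : HasShadowingProperty ⇑f) (H : Subgroup G) (hinv : ∀ x ∈ H, f x ∈ H) :
    ∀ E ∈ nhds (1 : G), ∃ D ∈ nhds (1 : G),
      ∀ y : ℕ → G, (∀ k : ℕ, f (y k) * (y (k + 1))⁻¹ ∈ D * (H : Set G)) →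
        ∃ z : G, ∀ k : ℕ, (⇑f)^[k] z * (y k)⁻¹ ∈ E * (H : Set G) := by
  intro E hE
  obtain ⟨D, hD, hshadow⟩ := hsh E hE
  refine ⟨D, hD, fun y hy => ?_⟩
  obtain ⟨x, hx, hxy⟩ := exists_pseudoOrbit_of_mem_mul_subgroup hinv hy
  obtain ⟨z, hz⟩ := hshadow x hx
  refine ⟨z, fun k => ?_⟩
  rw [← mul_inv_mul_mul_cancel _ (x k)]
  exact Set.mul_mem_mul (hz k) (hxy k)

/-- If `f` has the shadowing property and `H` is an `f`-invariant subgroup, then for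
every neighborhood `E` of the identity there is a neighborhood `D` of the identity such
that every `D·H`-pseudo-orbit is `E·H`-shadowed by some point of `G`. -/
theorem shadowing_mod_subgroup {G : Type*} [CommGroup G] [TopologicalSpace G]
    [IsTopologicalGroup G] [CompactSpace G] (f : G →* G) (hf : Continuous f)
    (hsh : HasShadowingProperty ⇑f) (H : Subgroup G) (hinv : ∀ x ∈ H, f x ∈ H) :
    ∀ E ∈ nhds (1 : G), ∃ D ∈ nhds (1 : G),
      ∀ y : ℕ → G, (∀ k : ℕ, f (y k) * (y (k + 1))⁻¹ ∈ D * (H : Set G)) →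
        ∃ z : G, ∀ k : ℕ, (⇑f)^[k] z * (y k)⁻¹ ∈ E * (H : Set G) :=
  shadowing_mod_subgroup_general f hsh H hinv
end

section
/- Let f be a continuous endomorphism of a compact abelian topological group G with the shadowing property and H a closed f-invariant subgroup. Then the induced map f̃ : G/H → G/H, f̃(xH) = f(x)H, has the shadowing property with respect to the quotient uniformity. -/
/-! Shadowing descends along any open, continuous, surjective homomorphism `π` semiconjugating
`f` to `g`: a pseudo-orbit of `g` whose jumps lie in the open set `π '' D` lifts, jump by jump,
to a `D`-pseudo-orbit of `f`; a shadowing point `y` of the lift then projects to a shadowing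
point `π y`, because `π` carries orbits of `f` to orbits of `g` and preimages of neighborhoods
of `1` are neighborhoods of `1`. -/

open Function Topology

theorem exists_lift_pseudoOrbit {G Q : Type*} [Group G] [Group Q] {f : G → G} {g : Q → Q}
    (π : G →* Q) (hsemi : Semiconj π f g) (hπ : Surjective π) {D : Set G} {z : ℕ → Q} (hz : ∀ k, g (z k) * (z (k + 1))⁻¹ ∈ π '' D) :
    ∃ x : ℕ → G, (∀ k, π (x k) = z k) ∧ ∀ k, f (x k) * (x (k + 1))⁻¹ ∈ D := by
  choose d hdD hdπ using hz
  obtain ⟨x₀, hx₀⟩ := hπ (z 0)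
  let x : ℕ → G := fun k => Nat.rec x₀ (fun k xk => (d k)⁻¹ * f xk) k
  have hx_succ : ∀ k, x (k + 1) = (d k)⁻¹ * f (x k) := fun _ => rfl
  refine ⟨x, fun k => ?_, fun k => by simpa [hx_succ] using hdD k⟩
  induction k with
  | zero => exact hx₀
  | succ k ih => rw [hx_succ, map_mul, map_inv, hdπ, hsemi.eq, ih]; group

theorem HasShadowingProperty.of_semiconj {G Q : Type*} [Group G] [TopologicalSpace G] [Group Q]
    [TopologicalSpace Q] {f : G → G} {g : Q → Q} (hf : HasShadowingProperty f) (π : G →* Q)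
    (hsemi : Semiconj π f g) (hπ : IsOpenQuotientMap π) : HasShadowingProperty g := by
  intro E hE
  have hE' : π ⁻¹' E ∈ 𝓝 (1 : G) := hπ.continuous.continuousAt.preimage_mem_nhds (by simpa)
  obtain ⟨D, hD, hDsh⟩ := hf _ hE'
  refine ⟨π '' D, by simpa using hπ.isOpenMap.image_mem_nhds hD, fun z hz => ?_⟩
  obtain ⟨x, hxz, hx⟩ := exists_lift_pseudoOrbit π hsemi hπ.surjective hz
  obtain ⟨y, hy⟩ := hDsh x hx
  refine ⟨π y, fun k => ?_⟩
  simpa [← (hsemi.iterate_right k).eq, hxz] using hy k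

theorem quotient_shadowing_general {G : Type*} [CommGroup G] [TopologicalSpace G]
    [IsTopologicalGroup G] (f : G →* G)
    (hsh : HasShadowingProperty ⇑f) (H : Subgroup G)
    (hinv : H ≤ H.comap f) :
    HasShadowingProperty ⇑(QuotientGroup.map H H f hinv) :=
  hsh.of_semiconj (QuotientGroup.mk' H) (fun _ => rfl) QuotientGroup.isOpenQuotientMap_mk

/-- If a continuous endomorphism `f` of a compact abelian topological group has the
shadowing property and `H` is a closed `f`-invariant subgroup, then the induced map on
`G/H` has the shadowing property. -/
theorem quotient_shadowing {G : Type*} [CommGroup G] [TopologicalSpace G]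
    [IsTopologicalGroup G] [CompactSpace G] (f : G →* G) (hf : Continuous f)
    (hsh : HasShadowingProperty ⇑f) (H : Subgroup G) (hc : IsClosed (H : Set G))
    (hinv : H ≤ H.comap f) :
    HasShadowingProperty ⇑(QuotientGroup.map H H f hinv) :=
  quotient_shadowing_general f hsh H hinv
end
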